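/- Let θ : ℝ/ℤ → ℝ be Lipschitz with ‖θ'‖_∞ ≤ n, θ(x) = 0, and n ≥ 4. Then the n-th Fejér mean satisfies |σ_n θ(x)| ≤ 4 + ‖θ‖_∞/4. -/

import Mathlib

open Real intervalIntegral

/-- The Fejér kernel with period 1. -/
noncomputable def fejerKernel (n : ℕ) (y : ℝ) : ℝ :=
  (1 / n) * (Real.sin (n * π * y) / Real.sin (π * y)) ^ 2

/-- The `n`-th Fejér mean of a 1-periodic function `θ` at `x`:
`σ_n θ(x) = ∫_{-1/2}^{1/2} θ(x - y) F_n(y) dy`. -/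
noncomputable def fejerMean (n : ℕ) (θ : ℝ → ℝ) (x : ℝ) : ℝ :=
  ∫ y in (-(1/2) : ℝ)..(1/2), θ (x - y) * fejerKernel n y

/-! Split `∫ |θ (x - y)| F_n(y) dy` at `|y| = 2 / n`. Near `0`, `θ x = 0` and the derivative
bound give `|θ (x - y)| ≤ n |y|`, while `F_n ≤ n`, so this part is at most `n² (2 / n)² = 4`.
Away from `0`, `|θ| ≤ ‖θ‖_∞` and `F_n(y) ≤ 1 / (4 n y²)`, and `∫_{2/n ≤ |y| ≤ 1/2} y⁻² ≤ n`,
so the rest is at most `‖θ‖_∞ / 4`. -/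

open MeasureTheory Set

theorem Real.abs_sin_nat_mul_le (n : ℕ) (t : ℝ) : |sin (n * t)| ≤ n * |sin t| := by
  induction n with
  | zero => simp
  | succ k ih =>
    calc |sin ((k + 1 : ℕ) * t)| = |sin (k * t) * cos t + cos (k * t) * sin t| := by
          push_cast; rw [add_mul, one_mul, sin_add]
      _ ≤ |sin (k * t)| * |cos t| + |cos (k * t)| * |sin t| := by
          rw [← abs_mul, ← abs_mul]; exact abs_add_le _ _
      _ ≤ k * |sin t| * 1 + 1 * |sin t| := by
          gcongr <;> exact abs_cos_le_one _
      _ = (k + 1 : ℕ) * |sin t| := by push_cast; ring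

theorem fejerKernel_nonneg (n : ℕ) (y : ℝ) : 0 ≤ fejerKernel n y := by
  unfold fejerKernel; positivity

theorem fejerKernel_le (n : ℕ) (y : ℝ) : fejerKernel n y ≤ n := by
  have hsin : sin (n * π * y) ^ 2 ≤ (n : ℝ) ^ 2 * sin (π * y) ^ 2 := by
    rw [← sq_abs, ← sq_abs (sin (π * y)), ← mul_pow, mul_assoc]
    gcongr
    exact abs_sin_nat_mul_le n (π * y)
  calc fejerKernel n y ≤ 1 / n * (n : ℝ) ^ 2 := by
        unfold fejerKernel
        refine mul_le_mul_of_nonneg_left ?_ (by positivity)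
        rw [div_pow]
        rcases eq_or_ne (sin (π * y)) 0 with h | h
        · simp [h]
        · exact div_le_of_le_mul₀ (by positivity) (by positivity) hsin
    _ = n := by rw [one_div_mul_eq_div, sq, mul_self_div_self]

theorem fejerKernel_le_inv_sq (n : ℕ) {y : ℝ} (hy0 : y ≠ 0) (hy : |y| ≤ 1 / 2) :
    fejerKernel n y ≤ (4 * n * y ^ 2)⁻¹ := by
  have hjordan : 2 * |y| ≤ |sin (π * y)| := by
    have h := mul_abs_le_abs_sin (x := π * y) (by
      rw [abs_mul, abs_of_pos pi_pos]; nlinarith [pi_pos])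
    rwa [abs_mul, abs_of_pos pi_pos, ← mul_assoc, div_mul_cancel₀ _ pi_ne_zero] at h
  have hsq : 4 * y ^ 2 ≤ sin (π * y) ^ 2 := by
    rw [← sq_abs (sin _), show 4 * y ^ 2 = (2 * |y|) ^ 2 by rw [mul_pow, sq_abs]; norm_num]
    gcongr
  calc fejerKernel n y ≤ 1 / n * (4 * y ^ 2)⁻¹ := by
        unfold fejerKernel
        refine mul_le_mul_of_nonneg_left ?_ (by positivity)
        rw [div_pow, ← one_div]
        exact div_le_div₀ zero_le_one (sin_sq_le_one _) (by positivity) hsq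
    _ = (4 * n * y ^ 2)⁻¹ := by ring

theorem measurable_fejerKernel (n : ℕ) : Measurable (fejerKernel n) := by
  unfold fejerKernel; fun_prop

theorem Continuous.intervalIntegrable_mul_fejerKernel {φ : ℝ → ℝ} (hφ : Continuous φ) (n : ℕ)
    (a b : ℝ) : IntervalIntegrable (fun y => φ y * fejerKernel n y) volume a b := by
  rw [intervalIntegrable_iff] at *
  refine (intervalIntegrable_iff.1 (hφ.intervalIntegrable a b)).mul_bdd (c := n)
    (measurable_fejerKernel n).aestronglyMeasurable (ae_of_all _ fun y => ?_)
  rw [Real.norm_of_nonneg (fejerKernel_nonneg n y)]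
  exact fejerKernel_le n y

theorem abs_mul_fejerKernel_le_mul_abs {u : ℝ} {n : ℕ} {y : ℝ} (hu : |u| ≤ n * |y|) :
    |u * fejerKernel n y| ≤ n ^ 2 * |y| := by
  rw [abs_mul, abs_of_nonneg (fejerKernel_nonneg n y)]
  calc |u| * fejerKernel n y ≤ n * |y| * n :=
        mul_le_mul hu (fejerKernel_le n y) (fejerKernel_nonneg n y) (by positivity)
    _ = n ^ 2 * |y| := by ring

theorem abs_mul_fejerKernel_le_div_sq {u M : ℝ} (n : ℕ) {y : ℝ} (hu : |u| ≤ M) (hy0 : y ≠ 0)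
    (hy : |y| ≤ 1 / 2) : |u * fejerKernel n y| ≤ M / (4 * n) / y ^ 2 := by
  rw [abs_mul, abs_of_nonneg (fejerKernel_nonneg n y)]
  calc |u| * fejerKernel n y ≤ M * (4 * n * y ^ 2)⁻¹ :=
        mul_le_mul hu (fejerKernel_le_inv_sq n hy0 hy) (fejerKernel_nonneg n y)
          ((abs_nonneg u).trans hu)
    _ = M / (4 * n) / y ^ 2 := by ring

theorem integral_abs_symm {a : ℝ} (ha : 0 ≤ a) : ∫ y in -a..a, |y| = a ^ 2 := by
  have hpos : ∫ y in (0 : ℝ)..a, |y| = a ^ 2 / 2 := by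
    rw [integral_congr fun y hy => abs_of_nonneg (uIcc_of_le ha ▸ hy).1, integral_id]
    ring
  have hneg : ∫ y in -a..0, |y| = a ^ 2 / 2 := by
    rw [← neg_zero, ← integral_comp_neg]
    simpa only [abs_neg] using hpos
  rw [← integral_add_adjacent_intervals (b := 0) (continuous_abs.intervalIntegrable _ _)
    (continuous_abs.intervalIntegrable _ _), hneg, hpos]
  ring

theorem integral_div_sq {a b : ℝ} (h : (0 : ℝ) ∉ uIcc a b) (D : ℝ) :
    ∫ y in a..b, D / y ^ 2 = D * (a⁻¹ - b⁻¹) := by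
  have hzpow : ∀ y : ℝ, D / y ^ 2 = D * y ^ (-2 : ℤ) := fun y => by
    rw [zpow_neg, zpow_two, div_eq_mul_inv, sq]
  simp_rw [hzpow, intervalIntegral.integral_const_mul,
    integral_zpow (n := -2) (Or.inr ⟨by norm_num, h⟩)]
  congr 1
  norm_num
  ring

theorem integral_le_of_le_div_sq {f : ℝ → ℝ} {a b D : ℝ} (ha : 0 < a) (hab : a ≤ b)
    (hf : IntervalIntegrable f volume a b) (hfD : ∀ y ∈ Icc a b, f y ≤ D / y ^ 2) :
    ∫ y in a..b, f y ≤ D * (a⁻¹ - b⁻¹) := by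
  have h0 : (0 : ℝ) ∉ uIcc a b := by
    rw [uIcc_of_le hab]; exact fun h => ha.not_ge h.1
  have hcont : ContinuousOn (fun y : ℝ => D / y ^ 2) (uIcc a b) :=
    continuousOn_const.div (continuousOn_id.pow 2) fun y hy =>
      pow_ne_zero 2 (ne_of_mem_of_not_mem hy h0)
  rw [← integral_div_sq h0]
  exact integral_mono_on hab hf hcont.intervalIntegrable hfD

theorem integral_le_of_le_mul_abs_of_le_div_sq {f : ℝ → ℝ} {a b C D : ℝ} (ha : 0 < a)
    (hab : a ≤ b) (hf : IntervalIntegrable f volume (-b) b)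
    (hnear : ∀ y, |y| ≤ a → f y ≤ C * |y|) (hfar : ∀ y, a ≤ |y| → |y| ≤ b → f y ≤ D / y ^ 2) :
    ∫ y in -b..b, f y ≤ C * a ^ 2 + 2 * (D * (a⁻¹ - b⁻¹)) := by
  have hsub : ∀ c ∈ Icc (-b) b, ∀ d ∈ Icc (-b) b, IntervalIntegrable f volume c d :=
    fun c hc d hd => hf.mono_set (uIcc_subset_uIcc (Icc_subset_uIcc hc) (Icc_subset_uIcc hd))
  have hf₁ := hsub (-b) ⟨le_rfl, by linarith⟩ (-a) ⟨by linarith, by linarith⟩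
  have hf₂ := hsub (-a) ⟨by linarith, by linarith⟩ a ⟨by linarith, hab⟩
  have hf₃ := hsub a ⟨by linarith, hab⟩ b ⟨by linarith, le_rfl⟩
  have habs : ∀ y ∈ Icc a b, |y| = y := fun y hy => abs_of_pos (ha.trans_le hy.1)
  have hneg : ∫ y in -b..-a, f y ≤ D * (a⁻¹ - b⁻¹) := by
    rw [← integral_comp_neg]
    refine integral_le_of_le_div_sq ha hab ?_ fun y hy => ?_
    · simpa using ((IntervalIntegrable.iff_comp_neg).1 hf₁).symm
    · rw [← neg_sq]
      exact hfar (-y) (by rw [abs_neg, habs y hy]; exact hy.1)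
        (by rw [abs_neg, habs y hy]; exact hy.2)
  have hmid : ∫ y in -a..a, f y ≤ C * a ^ 2 := by
    rw [← integral_abs_symm ha.le, ← intervalIntegral.integral_const_mul]
    exact integral_mono_on (by linarith) hf₂
      ((continuous_const.mul continuous_abs).intervalIntegrable _ _)
      fun y hy => hnear y (abs_le.2 hy)
  have hpos : ∫ y in a..b, f y ≤ D * (a⁻¹ - b⁻¹) :=
    integral_le_of_le_div_sq ha hab hf₃ fun y hy =>
      hfar y (by rw [habs y hy]; exact hy.1) (by rw [habs y hy]; exact hy.2)
  rw [← integral_add_adjacent_intervals hf₁ (hf₂.trans hf₃),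
    ← integral_add_adjacent_intervals hf₂ hf₃]
  linarith

theorem Function.Periodic.abs_le_ciSup_abs {θ : ℝ → ℝ} {c : ℝ} (hper : Function.Periodic θ c)
    (hc : c ≠ 0) (hθ : Continuous θ) (t : ℝ) : |θ t| ≤ ⨆ s, |θ s| :=
  le_ciSup (((hper.comp abs).isBounded_of_continuous hc (continuous_abs.comp hθ)).bddAbove) t

/-- If `θ` is 1-periodic, Lipschitz with `‖θ'‖_∞ ≤ n`, `θ(x) = 0` and `n ≥ 4`, then
`|σ_n θ(x)| ≤ 4 + ‖θ‖_∞ / 4`. -/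
theorem abs_fejerMean_le_of_deriv_le (n : ℕ) (hn : 4 ≤ n) (θ : ℝ → ℝ)
    (hper : Function.Periodic θ 1) (hdiff : Differentiable ℝ θ)
    (hlip : ∀ t : ℝ, |deriv θ t| ≤ n) (x : ℝ) (hx : θ x = 0) :
    |fejerMean n θ x| ≤ 4 + (⨆ t : ℝ, |θ t|) / 4 := by
  set M := ⨆ t : ℝ, |θ t|
  have hn4 : (4 : ℝ) ≤ n := by exact_mod_cast hn
  have hbound : ∀ t, |θ t| ≤ M := hper.abs_le_ciSup_abs one_ne_zero hdiff.continuous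
  have hθx : ∀ y, |θ (x - y)| ≤ n * |y| := fun y => by
    simpa [hx] using Convex.norm_image_sub_le_of_norm_deriv_le (fun t _ => hdiff t)
      (fun t _ => hlip t) convex_univ (mem_univ x) (mem_univ (x - y))
  have hint : IntervalIntegrable (fun y => θ (x - y) * fejerKernel n y) volume (-(1 / 2)) (1 / 2) :=
    (hdiff.continuous.comp (continuous_sub_left x)).intervalIntegrable_mul_fejerKernel n _ _
  calc |fejerMean n θ x| ≤ ∫ y in -(1 / 2)..1 / 2, |θ (x - y) * fejerKernel n y| :=
        abs_integral_le_integral_abs (by norm_num)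
    _ ≤ (n : ℝ) ^ 2 * (2 / n) ^ 2 + 2 * (M / (4 * n) * ((2 / (n : ℝ))⁻¹ - (1 / 2)⁻¹)) :=
        integral_le_of_le_mul_abs_of_le_div_sq (by positivity)
          (by rw [div_le_div_iff₀ (by positivity) two_pos]; linarith) hint.abs
          (fun y _ => abs_mul_fejerKernel_le_mul_abs (hθx y))
          (fun y hay hy => abs_mul_fejerKernel_le_div_sq n (hbound _)
            (abs_pos.1 ((by positivity : (0 : ℝ) < 2 / n).trans_le hay)) hy)
    _ ≤ 4 + M / 4 := by
        have hM : 0 ≤ M := (abs_nonneg _).trans (hbound 0)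
        field_simp
        nlinarith
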